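/- Let V be a finite set, E ⊆ V × V a set of directed edges, w : V × V → ℕ a weight function, and L a positive integer. There exists a schedule s : V → {0,…,L−1} satisfying s(v) − s(u) ≥ w(u,v) for every edge (u,v) ∈ E if and only if every directed path in (V,E) has total weight at most L − 1; that is, if and only if for every finite sequence v_0, v_1, …, v_m of vertices with (v_i, v_{i+1}) ∈ E for all 0 ≤ i < m, one has Σ_{i=0}^{m−1} w(v_i, v_{i+1}) ≤ L − 1. -/
import Mathlib


/-- Feasibility of latency-constrained SDC scheduling: a schedule
`s : V → {0,…,L-1}` with `s v - s u ≥ w (u,v)` for every edge `(u,v) ∈ E`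
exists iff every directed path in `(V,E)` has total weight at most `L - 1`. -/
theorem stmt_4 {V : Type*} [Fintype V] (E : Set (V × V)) (w : V × V → ℕ)
    (L : ℕ) (hL : 0 < L) :
    (∃ s : V → ℕ, (∀ v, s v < L) ∧
        ∀ p ∈ E, (w p : ℤ) ≤ (s p.2 : ℤ) - (s p.1 : ℤ)) ↔
      (∀ (m : ℕ) (v : ℕ → V), (∀ i < m, (v i, v (i + 1)) ∈ E) →
        ∑ i ∈ Finset.range m, w (v i, v (i + 1)) ≤ L - 1) := by
  constructor
  · rintro ⟨s, hsL, hs⟩ m v hv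
    have key : ∀ k ≤ m, (∑ i ∈ Finset.range k, w (v i, v (i + 1)) : ℤ) ≤
        (s (v k) : ℤ) - (s (v 0) : ℤ) := by
      intro k hk
      induction k with
      | zero => simp
      | succ n ih =>
        rw [Finset.sum_range_succ]
        have h1 := ih (by omega)
        have h2 := hs (v n, v (n + 1)) (hv n (by omega))
        push_cast
        simp only at h2
        linarith
    have h := key m le_rfl
    have h1 : (s (v m) : ℤ) ≤ (L : ℤ) - 1 := by
      have := hsL (v m)
      omega
    have h2 : (∑ i ∈ Finset.range m, w (v i, v (i + 1)) : ℤ) ≤ (L : ℤ) - 1 := by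
      have : (0 : ℤ) ≤ (s (v 0) : ℤ) := by positivity
      linarith
    have : (∑ i ∈ Finset.range m, w (v i, v (i + 1)) : ℤ) = ((∑ i ∈ Finset.range m, w (v i, v (i + 1)) : ℕ) : ℤ) := by push_cast; rfl
    omega
  · intro hpath
    set S : V → Set ℕ := fun u => {n | ∃ (m : ℕ) (f : ℕ → V),
        (∀ i < m, (f i, f (i + 1)) ∈ E) ∧ f m = u ∧
        ∑ i ∈ Finset.range m, w (f i, f (i + 1)) = n} with hS
    have hne : ∀ u, (S u).Nonempty := by
      intro u
      exact ⟨0, 0, fun _ => u, by simp, rfl, by simp⟩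
    have hbdd : ∀ u, ∀ n ∈ S u, n ≤ L - 1 := by
      rintro u n ⟨m, f, hf, _, rfl⟩
      exact hpath m f hf
    have hBdd : ∀ u, BddAbove (S u) := fun u => ⟨L - 1, fun n hn => hbdd u n hn⟩
    refine ⟨fun u => sSup (S u), ?_, ?_⟩
    · intro u
      have hmem := Nat.sSup_mem (hne u) (hBdd u)
      have := hbdd u _ hmem
      show sSup (S u) < L
      omega
    · rintro ⟨a, b⟩ hab
      have hmem := Nat.sSup_mem (hne a) (hBdd a)
      obtain ⟨m, f, hf, hfm, hsum⟩ := hmem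
      -- extend the path by the edge (a,b)
      set g : ℕ → V := fun i => if i ≤ m then f i else b with hg
      have hgm : ∀ i ≤ m, g i = f i := fun i hi => by simp [hg, hi]
      have hedges : ∀ i < m + 1, (g i, g (i + 1)) ∈ E := by
        intro i hi
        rcases lt_or_eq_of_le (Nat.lt_succ_iff.mp hi) with h | h
        · rw [hgm i (le_of_lt h), hgm (i + 1) h]
          exact hf i h
        · subst h
          have : g i = a := by rw [hgm i le_rfl, hfm]
          have h2 : g (i + 1) = b := by simp [hg]
          rw [this, h2]
          exact hab
      have hgsum : ∑ i ∈ Finset.range (m + 1), w (g i, g (i + 1)) =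
          sSup (S a) + w (a, b) := by
        rw [Finset.sum_range_succ]
        have h1 : ∑ i ∈ Finset.range m, w (g i, g (i + 1)) =
            ∑ i ∈ Finset.range m, w (f i, f (i + 1)) := by
          apply Finset.sum_congr rfl
          intro i hi
          rw [Finset.mem_range] at hi
          rw [hgm i (le_of_lt hi), hgm (i + 1) hi]
        have h2 : g m = a := by rw [hgm m le_rfl, hfm]
        have h3 : g (m + 1) = b := by simp [hg]
        rw [h1, hsum, h2, h3]
      have hmem' : sSup (S a) + w (a, b) ∈ S b :=
        ⟨m + 1, g, hedges, by simp [hg], hgsum⟩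
      have hle : sSup (S a) + w (a, b) ≤ sSup (S b) := le_csSup (hBdd b) hmem'
      simp only
      push_cast
      omega
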